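/- Johnson–Lindenstrauss concentration: if R ∈ ℝ^{D'×D} has i.i.d. N(0, 1/D') entries, then for any fixed unit vector x ∈ ℝ^D and any 0 < ε < 1, Pr(|‖Rx‖₂² − 1| > ε) ≤ 2 exp(−D'(ε²/4 − ε³/6)). -/

import Mathlib

/-!
Since `x` is a unit vector, each coordinate `(Rx)ᵢ = ∑ⱼ Rᵢⱼ xⱼ` is a sum of independent centred
Gaussians of total variance `1/D'`, and the rows of `R` are independent; so `‖Rx‖²` is a sum of
`D'` squares of i.i.d. `N(0, 1/D')` variables, i.e. a rescaled χ² variable. Its moment generating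
function is `(1 - 2t/D')^(-D'/2)`, and the Chernoff method bounds the two tails by
`(e^{-ε/2} √(1 + ε))^{D'}` and `(e^{ε/2} √(1 - ε))^{D'}`. The cubic Taylor estimates
`log (1 + ε) ≤ ε - ε²/2 + ε³/3` and `log (1 - ε) ≤ -ε - ε²/2` bound both bases by
`exp (-(ε²/4 - ε³/6))`.
-/

open MeasureTheory ProbabilityTheory Real
open scoped NNReal

lemma one_add_le_exp_cubic {x : ℝ} (hx : 0 ≤ x) : 1 + x ≤ exp (x - x ^ 2 / 2 + x ^ 3 / 3) := by
  have hu : 0 ≤ x - x ^ 2 / 2 + x ^ 3 / 3 := by nlinarith [sq_nonneg (x - 3 / 4)]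
  have h := sum_le_exp_of_nonneg hu 4
  norm_num [Finset.sum_range_succ, Nat.factorial] at h
  refine le_trans ?_ h
  nlinarith [pow_nonneg hx 4, pow_nonneg hx 5, pow_nonneg hx 6, pow_nonneg hx 7,
    pow_nonneg hx 8, pow_nonneg hx 9]

lemma one_sub_le_exp_neg_sub_sq {x : ℝ} (h₀ : 0 ≤ x) (h₁ : x < 1) :
    1 - x ≤ exp (-x - x ^ 2 / 2) := by
  have hlog := sum_le_hasSum (Finset.range 2) (fun n _ => by positivity)
    (hasSum_pow_div_log_of_abs_lt_one (by rwa [abs_of_nonneg h₀]))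
  norm_num [Finset.sum_range_succ] at hlog
  rw [← log_le_iff_le_exp (by linarith)]
  linarith

lemma exp_neg_half_mul_sqrt_one_add_le {ε : ℝ} (hε : 0 ≤ ε) :
    exp (-(ε / 2)) * √(1 + ε) ≤ exp (-(ε ^ 2 / 4 - ε ^ 3 / 6)) :=
  calc exp (-(ε / 2)) * √(1 + ε)
      ≤ exp (-(ε / 2)) * exp ((ε - ε ^ 2 / 2 + ε ^ 3 / 3) / 2) := by
        rw [exp_half (ε - ε ^ 2 / 2 + ε ^ 3 / 3)]; gcongr; exact one_add_le_exp_cubic hε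
    _ = exp (-(ε ^ 2 / 4 - ε ^ 3 / 6)) := by rw [← exp_add]; ring_nf

lemma exp_half_mul_sqrt_one_sub_le {ε : ℝ} (h₀ : 0 ≤ ε) (h₁ : ε < 1) :
    exp (ε / 2) * √(1 - ε) ≤ exp (-(ε ^ 2 / 4 - ε ^ 3 / 6)) :=
  calc exp (ε / 2) * √(1 - ε)
      ≤ exp (ε / 2) * exp ((-ε - ε ^ 2 / 2) / 2) := by
        rw [exp_half (-ε - ε ^ 2 / 2)]; gcongr; exact one_sub_le_exp_neg_sub_sq h₀ h₁
    _ ≤ exp (-(ε ^ 2 / 4 - ε ^ 3 / 6)) := by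
        rw [← exp_add, exp_le_exp]; nlinarith [pow_nonneg h₀ 3]

section GaussianVectors

variable {ι : Type*} [Fintype ι]

lemma map_sum_pi_gaussianReal (m : ι → ℝ) (v : ι → ℝ≥0) :
    (Measure.pi fun j => gaussianReal (m j) (v j)).map (fun y => ∑ j, y j)
      = gaussianReal (∑ j, m j) (∑ j, v j) := by
  refine Measure.ext_of_charFun (funext fun t => ?_)
  rw [charFun_map_sum_pi_eq_prod, Finset.prod_apply]
  simp_rw [charFun_gaussianReal, ← Complex.exp_sum]
  push_cast
  congr 1
  simp_rw [Finset.sum_sub_distrib, ← Finset.sum_mul, ← Finset.mul_sum, ← Finset.sum_div,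
    ← Finset.sum_mul]

lemma map_sum_mul_pi_gaussianReal (v : ℝ≥0) (x : ι → ℝ) :
    (Measure.pi fun _ : ι => gaussianReal 0 v).map (fun y => ∑ j, y j * x j)
      = gaussianReal 0 ((∑ j, x j ^ 2).toNNReal * v) := by
  have hcomp : (fun y : ι → ℝ => ∑ j, y j * x j) = (fun y => ∑ j, y j) ∘ fun y j => y j * x j :=
    rfl
  rw [hcomp, ← Measure.map_map (by fun_prop) (by fun_prop),
    Measure.pi_map_pi (f := fun j u => u * x j) (fun _ => by fun_prop)]
  simp_rw [gaussianReal_map_mul_const, mul_zero]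
  rw [map_sum_pi_gaussianReal, Finset.sum_const_zero, ← Finset.sum_mul]
  congr
  ext
  simp [Real.coe_toNNReal _ (Finset.sum_nonneg fun j _ => sq_nonneg (x j))]

lemma mgf_sq_gaussianReal {v : ℝ≥0} {t : ℝ} (ht : 2 * t * v < 1) :
    mgf (fun y => y ^ 2) (gaussianReal 0 v) t = (√(1 - 2 * t * v))⁻¹ := by
  rcases eq_or_ne v 0 with rfl | hv
  · simp [mgf, gaussianReal_zero_var]
  have hv' : (0 : ℝ) < v := by positivity
  have hs : 0 < 1 - 2 * t * v := by linarith
  have hkernel : ∀ y : ℝ, gaussianPDFReal 0 v y * exp (t * y ^ 2)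
      = (√(2 * π * v))⁻¹ * exp (-((1 - 2 * t * v) / (2 * v)) * y ^ 2) := by
    intro y
    rw [gaussianPDFReal, mul_assoc, ← exp_add]
    congr 2
    field_simp
    ring
  rw [mgf, integral_gaussianReal_eq_integral_smul hv]
  simp_rw [smul_eq_mul, hkernel, integral_const_mul, integral_gaussian]
  rw [show π / ((1 - 2 * t * v) / (2 * v)) = 2 * π * v / (1 - 2 * t * v) by field_simp,
    sqrt_div (by positivity)]
  have : √(2 * π * v) ≠ 0 := by positivity
  field_simp

lemma mgf_sum_sq_pi_gaussianReal {v : ℝ≥0} {t : ℝ} (ht : 2 * t * v < 1) :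
    mgf (fun y => ∑ i, y i ^ 2) (Measure.pi fun _ : ι => gaussianReal 0 v) t
      = (√(1 - 2 * t * v))⁻¹ ^ Fintype.card ι := by
  simp_rw [mgf, Finset.mul_sum, exp_sum]
  rw [integral_fintype_prod_eq_pow (fun y => exp (t * y ^ 2))]
  exact congrArg (· ^ _) (mgf_sq_gaussianReal ht)

lemma integrable_exp_mul_sum_sq_pi_gaussianReal {v : ℝ≥0} {t : ℝ} (ht : 2 * t * v < 1) :
    Integrable (fun y => exp (t * ∑ i, y i ^ 2)) (Measure.pi fun _ : ι => gaussianReal 0 v) := by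
  rw [← mgf_pos_iff, mgf_sum_sq_pi_gaussianReal ht]
  have : 0 < 1 - 2 * t * v := by linarith
  positivity

variable {v : ℝ≥0} {ε : ℝ}

-- The Chernoff parameter `t` is the minimiser of `-t (1 + ε) n v - (n/2) log (1 - 2 t v)`.
lemma measureReal_sum_sq_ge_le (hv : v ≠ 0) (hε : 0 ≤ ε) :
    (Measure.pi fun _ : ι => gaussianReal 0 v).real
        {y | (1 + ε) * (Fintype.card ι * v) ≤ ∑ i, y i ^ 2}
      ≤ (exp (-(ε / 2)) * √(1 + ε)) ^ Fintype.card ι := by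
  have hv' : (0 : ℝ) < v := by positivity
  set t := ε / (2 * v * (1 + ε)) with ht_def
  have hs : 1 - 2 * t * v = (1 + ε)⁻¹ := by rw [ht_def]; field_simp; ring
  have ht : 2 * t * v < 1 := by linarith [inv_pos.2 (by linarith : 0 < 1 + ε)]
  refine (measure_ge_le_exp_mul_mgf (t := t) _ (by positivity)
    (integrable_exp_mul_sum_sq_pi_gaussianReal ht)).trans_eq ?_
  rw [mgf_sum_sq_pi_gaussianReal ht, hs, sqrt_inv, inv_inv, mul_pow, ← exp_nat_mul, ht_def]
  congr 2
  field_simp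

lemma measureReal_sum_sq_le_le (hv : v ≠ 0) (hε₀ : 0 ≤ ε) (hε₁ : ε < 1) :
    (Measure.pi fun _ : ι => gaussianReal 0 v).real
        {y | ∑ i, y i ^ 2 ≤ (1 - ε) * (Fintype.card ι * v)}
      ≤ (exp (ε / 2) * √(1 - ε)) ^ Fintype.card ι := by
  have hv' : (0 : ℝ) < v := by positivity
  have hε₁' : 1 - ε ≠ 0 := by linarith
  set t := -(ε / (2 * v * (1 - ε))) with ht_def
  have hs : 1 - 2 * t * v = (1 - ε)⁻¹ := by rw [ht_def]; field_simp; ring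
  have ht : 2 * t * v < 1 := by linarith [inv_pos.2 (sub_pos.2 hε₁)]
  refine (measure_le_le_exp_mul_mgf (t := t) _ (by rw [ht_def, neg_nonpos]; positivity)
    (integrable_exp_mul_sum_sq_pi_gaussianReal ht)).trans_eq ?_
  rw [mgf_sum_sq_pi_gaussianReal ht, hs, sqrt_inv, inv_inv, mul_pow, ← exp_nat_mul, ht_def]
  congr 2
  field_simp

end GaussianVectors

/-- Johnson–Lindenstrauss concentration: if `R ∈ ℝ^{D'×D}` has i.i.d. `N(0, 1/D')`
entries, then for any fixed unit vector `x` and any `0 < ε < 1`,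
`Pr(|‖Rx‖₂² − 1| > ε) ≤ 2 exp(−D'(ε²/4 − ε³/6))`. -/
theorem jl_concentration
    (D' D : ℕ) (hD' : 0 < D') (x : Fin D → ℝ) (hx : ∑ j, x j ^ 2 = 1)
    (ε : ℝ) (hε : 0 < ε) (hε1 : ε < 1) :
    (Measure.pi fun _ : Fin D' =>
        Measure.pi fun _ : Fin D => gaussianReal 0 (Real.toNNReal (1 / D')))
      {R | |(∑ i, (∑ j, R i j * x j) ^ 2) - 1| > ε} ≤
      ENNReal.ofReal (2 * Real.exp (-(D' : ℝ) * (ε ^ 2 / 4 - ε ^ 3 / 6))) := by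
  set v := Real.toNNReal (1 / D')
  have hv : v ≠ 0 := by positivity
  have hnv : (Fintype.card (Fin D') : ℝ) * v = 1 := by simp [v]; field_simp
  set P := Measure.pi fun _ : Fin D' => gaussianReal 0 v
  have hrows : (Measure.pi fun _ : Fin D' => Measure.pi fun _ : Fin D => gaussianReal 0 v).map
      (fun R i => ∑ j, R i j * x j) = P := by
    rw [Measure.pi_map_pi (f := fun _ (r : Fin D → ℝ) => ∑ j, r j * x j)
      fun _ => (by fun_prop : Measurable _).aemeasurable]
    simp_rw [map_sum_mul_pi_gaussianReal, hx, Real.toNNReal_one, one_mul]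
    rfl
  have hsplit : {y : Fin D' → ℝ | |∑ i, y i ^ 2 - 1| > ε}
      ⊆ {y | (1 + ε) * (Fintype.card (Fin D') * v) ≤ ∑ i, y i ^ 2}
        ∪ {y | ∑ i, y i ^ 2 ≤ (1 - ε) * (Fintype.card (Fin D') * v)} := by
    intro y hy
    simp only [hnv, mul_one, Set.mem_ofPred_eq, Set.mem_union, gt_iff_lt, lt_abs] at hy ⊢
    rcases hy with h | h
    · left; linarith
    · right; linarith
  have hup := (measureReal_sum_sq_ge_le (ι := Fin D') hv hε.le).trans
    (pow_le_pow_left₀ (by positivity) (exp_neg_half_mul_sqrt_one_add_le hε.le) _)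
  have hlow := (measureReal_sum_sq_le_le (ι := Fin D') hv hε.le hε1).trans
    (pow_le_pow_left₀ (by positivity) (exp_half_mul_sqrt_one_sub_le hε.le hε1) _)
  have hpow : exp (-(D' : ℝ) * (ε ^ 2 / 4 - ε ^ 3 / 6))
      = exp (-(ε ^ 2 / 4 - ε ^ 3 / 6)) ^ Fintype.card (Fin D') := by
    rw [Fintype.card_fin, ← exp_nat_mul]; ring_nf
  calc _ = P {y | |∑ i, y i ^ 2 - 1| > ε} := by
        rw [← hrows, Measure.map_apply (by fun_prop) (measurableSet_lt (by fun_prop) (by fun_prop))]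
        rfl
    _ ≤ P _ := measure_mono hsplit
    _ = ENNReal.ofReal (P.real _) := (ofReal_measureReal).symm
    _ ≤ _ := ENNReal.ofReal_le_ofReal <| (measureReal_union_le _ _).trans <| by linarith
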